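/- arXiv:1507.06939 — 3 statements merged into one kernel-verified Lean document; each statement's English description precedes it below -/
import Mathlib

section
/- Let c = Σ_{k≥0} k! x1^k be the Ferfera series and for n ≥ 1 let a_n := Σ_{η ∈ X*, deg(η) = n} (S a_η)(−c) · η be the degree-n component of (−c)^{∘−1}. Then a_n = (n−1) Σ_{η: deg(η) = n−1} (S a_η)(−c) · η x1 + (n−2) Σ_{η: deg(η) = n−2} (S a_η)(−c) · η x0, i.e., the polynomials a_n satisfy Devlin's recursion a_n = (n−1) a_{n−1} x1 + (n−2) a_{n−2} x0. -/
open scoped TensorProduct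

noncomputable section

namespace Paper

/-- Words over the alphabet `X = {x0, x1}`, encoded as lists over `Fin 2`
(`0` stands for the letter `x0` and `1` for the letter `x1`). -/
abbrev Word : Type := List (Fin 2)

/-- Formal power series `ℝ⟨⟨X⟩⟩`, given by their coefficient functions `η ↦ ⟨c,η⟩`. -/
abbrev Series : Type := Word → ℝ

/-- The left shift `x_i⁻¹(c)`. -/
def lshift (i : Fin 2) (c : Series) : Series := fun w => c (i :: w)

/-- Left concatenation `x_i c` of the letter `x_i` onto every word of `c`. -/
def lconcat (i : Fin 2) (c : Series) : Series := fun w =>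
  match w with
  | [] => 0
  | j :: v => if j = i then c v else 0

/-- Right concatenation `p x_i` of the letter `x_i` onto every word of `p`. -/
def rconcat {R : Type*} [Zero R] (i : Fin 2) (p : Word → R) : Word → R := fun w =>
  if w.getLast? = some i then p w.dropLast else 0

/-- The series of a single word. -/
def ind (η : Word) : Series := fun w => if w = η then 1 else 0

/-- The empty word as a series, the unit `∅` (often written `1`). -/
def one : Series := ind []

/-- The shuffle product, defined coefficientwise by the recursion
`⟨c ⧢ d, ∅⟩ = ⟨c,∅⟩⟨d,∅⟩` and `⟨c ⧢ d, x_i w⟩ = ⟨x_i⁻¹(c) ⧢ d, w⟩ + ⟨c ⧢ x_i⁻¹(d), w⟩`,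
which is the bilinear (and ultrametrically continuous) extension of the recursive
shuffle product of words. -/
def shuffleFn : Series → Series → Word → ℝ
  | c, d, [] => c [] * d []
  | c, d, i :: w => shuffleFn (lshift i c) d w + shuffleFn c (lshift i d) w

/-- The shuffle product on `ℝ⟨⟨X⟩⟩`. -/
def sh (c d : Series) : Series := shuffleFn c d

/-- The map `φ_d(x_i)` for the modified composition product:
`φ_d(x0)(e) = x0 e` and `φ_d(x1)(e) = x1 e + x0 (d ⧢ e)`. -/
def phiLetter (d : Series) (i : Fin 2) (e : Series) : Series :=
  if i = 0 then lconcat 0 e else lconcat 1 e + lconcat 0 (sh d e)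

/-- `φ_d(η)`, the algebra-homomorphism extension determined by
`φ_d(x_i η) = φ_d(x_i) ∘ φ_d(η)` and `φ_d(∅) = id`. -/
def phi (d : Series) : Word → Series → Series
  | [], e => e
  | i :: η, e => phiLetter d i (phi d η e)

/-- The modified composition product `c ∘̃ d = Σ_η ⟨c,η⟩ φ_d(η)(1)`. -/
def mcomp (c d : Series) : Series := fun w => ∑' η : Word, c η * phi d η one w

/-- The map `ψ_d(x_i)` for the composition product:
`ψ_d(x0)(e) = x0 e` and `ψ_d(x1)(e) = x0 (d ⧢ e)`. -/
def psiLetter (d : Series) (i : Fin 2) (e : Series) : Series :=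
  if i = 0 then lconcat 0 e else lconcat 0 (sh d e)

/-- `ψ_d(η)`, determined by `ψ_d(x_i η) = ψ_d(x_i) ∘ ψ_d(η)` and `ψ_d(∅) = id`. -/
def psi (d : Series) : Word → Series → Series
  | [], e => e
  | i :: η, e => psiLetter d i (psi d η e)

/-- The composition product `c ∘ d = Σ_η ⟨c,η⟩ ψ_d(η)(1)`. -/
def comp (c d : Series) : Series := fun w => ∑' η : Word, c η * psi d η one w

/-- The group operation on `ℝ⟨⟨X_δ⟩⟩ = {δ + c}`, transported to the `c`-parts:
`c_δ ∘ d_δ = δ + (d + c ∘̃ d)`. -/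
def gop (c d : Series) : Series := d + mcomp c d

/-- The Ferfera series `c = Σ_{k ≥ 0} k! x1^k`. -/
def ferfera : Series := fun w =>
  if w = List.replicate w.length (1 : Fin 2) then (Nat.factorial w.length : ℝ) else 0

/-- The degree of a word, `deg(η) = 2|η|_{x0} + |η|_{x1} + 1`. -/
def degW (η : Word) : ℕ := 2 * η.count 0 + η.count 1 + 1

/-- The output feedback Hopf algebra `H`: the free unital commutative `ℝ`-algebra on the
coordinate functions `a_η`, realized as polynomials in commuting variables indexed by words. -/
abbrev H : Type := MvPolynomial Word ℝ

/-- The coordinate function `a_η`. -/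
def aw (η : Word) : H := MvPolynomial.X η

/-- Character (pointwise) evaluation of elements of `H` at a series `c`:
`(a_{η₁} ⋯ a_{η_l})(c) = ⟨c,η₁⟩ ⋯ ⟨c,η_l⟩`, extended as an algebra map. -/
def evalS (c : Series) : H →ₐ[ℝ] ℝ := MvPolynomial.aeval c

/-- Evaluation of `H ⊗ H` at a pair of series: `(p ⊗ q)(c,d) = p(c) q(d)`. -/
def evalPair (c d : Series) : H ⊗[ℝ] H →ₗ[ℝ] ℝ :=
  (LinearMap.mul' ℝ ℝ).comp (TensorProduct.map (evalS c).toLinearMap (evalS d).toLinearMap)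

/-- The counit `ε` of `H`: `ε(a_η) = 0`, `ε(1) = 1`. -/
def counit : H →ₐ[ℝ] ℝ := evalS 0

/-- The defining property of the full coproduct `Δ` of the output feedback Hopf algebra:
`Δ a_η = Δ̃ a_η + 1 ⊗ a_η` where `Δ̃ a_η (c,d) = ⟨c ∘̃ d, η⟩`, i.e.
`(Δ a_η)(c,d) = ⟨c ∘̃ d, η⟩ + ⟨d, η⟩` for all series `c, d`; `Δ` is an algebra morphism. -/
def IsFBCoproduct (Δ : H →ₐ[ℝ] (H ⊗[ℝ] H)) : Prop :=
  ∀ (η : Word) (c d : Series), evalPair c d (Δ (aw η)) = mcomp c d η + d η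

/-- `S` is an antipode for the coproduct `Δ` (with counit `ε`):
`μ ∘ (S ⊗ id) ∘ Δ = 1·ε = μ ∘ (id ⊗ S) ∘ Δ`. -/
def IsAntipode (Δ : H →ₐ[ℝ] (H ⊗[ℝ] H)) (S : H →ₗ[ℝ] H) : Prop :=
  (∀ p : H, LinearMap.mul' ℝ H (TensorProduct.map S LinearMap.id (Δ p)) = counit p • 1) ∧
  (∀ p : H, LinearMap.mul' ℝ H (TensorProduct.map LinearMap.id S (Δ p)) = counit p • 1)

/-- The right-augmentation operator `θ̃_i`, the derivation on `H` with `θ̃_i(a_η) = a_{η x_i}`. -/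
def thetaR (i : Fin 2) : Derivation ℝ H H :=
  MvPolynomial.mkDerivation ℝ fun η => aw (η ++ [i])

/-- The left-augmentation operator `θ_i`, the derivation on `H` with `θ_i(a_η) = a_{x_i η}`. -/
def thetaL (i : Fin 2) : Derivation ℝ H H :=
  MvPolynomial.mkDerivation ℝ fun η => aw (i :: η)

/-- The multiplication operator `κ_∅(h) = h · a_∅`. -/
def kappaE : H →ₗ[ℝ] H := LinearMap.mulRight ℝ (aw [])

/-- The shuffle coefficient `⟨ξ ⧢ ν, η⟩`. -/
def shCoeff (ξ ν η : Word) : ℝ := sh (ind ξ) (ind ν) η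

/-- The finite set of words of length `n`. -/
def wordsLen (n : ℕ) : Finset Word :=
  (Finset.univ : Finset (Fin n → Fin 2)).image List.ofFn

/-- The deshuffle coproduct `Δ_⧢ a_η = Σ_{ξ,ν} ⟨ξ ⧢ ν, η⟩ a_ξ ⊗ a_ν`
(the unique coproduct satisfying `Δ_⧢ a_∅ = a_∅ ⊗ a_∅` and the coderivation recursions
with respect to the augmentation operators). -/
def deshuffle (η : Word) : H ⊗[ℝ] H :=
  ∑ k ∈ Finset.range (η.length + 1), ∑ ξ ∈ wordsLen k, ∑ ν ∈ wordsLen (η.length - k),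
    shCoeff ξ ν η • (aw ξ ⊗ₜ[ℝ] aw ν)

/-- Iterated integrals: `E_∅[u](t) = 1`, `E_{x_i η}[u](t) = ∫₀ᵗ u_i(s) E_η[u](s) ds`. -/
def E (u : Fin 2 → ℝ → ℝ) : Word → ℝ → ℝ
  | [], _ => 1
  | i :: η, t => ∫ s in (0:ℝ)..t, u i s * E u η s

end Paper

namespace Paper

/-- Devlin's polynomial `a_n = Σ_{η : deg(η) = n} (S a_η)(−c) · η`, the degree-`n`
homogeneous component of the group inverse `(−c)^{∘−1}` of the Ferfera series, viewed as a
(polynomial) series. -/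
def devlin (S : H →ₗ[ℝ] H) (n : ℕ) : Series := fun η =>
  if degW η = n then evalS (-ferfera) (S (aw η)) else 0

end Paper

namespace Paper

/-! ### Auxiliary development for Devlin's recursion -/

section Words

lemma wt_pos (i : Fin 2) : 1 ≤ (if i = 0 then 2 else 1 : ℕ) := by split <;> omega

lemma fin2_eq (i : Fin 2) : i = 0 ∨ i = 1 := by
  fin_cases i
  · exact Or.inl rfl
  · exact Or.inr rfl

/-- weighted letter count -/
def wsum (a b : ℕ) (w : Word) : ℕ := a * w.count 0 + b * w.count 1

lemma wsum_nil (a b : ℕ) : wsum a b [] = 0 := by simp [wsum]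

lemma wsum_cons (a b : ℕ) (i : Fin 2) (w : Word) :
    wsum a b (i :: w) = (if i = 0 then a else b) + wsum a b w := by
  rcases fin2_eq i with rfl | rfl <;> simp [wsum, List.count_cons] <;> ring

lemma wsum_one_one (w : Word) : wsum 1 1 w = w.length := by
  induction w with
  | nil => simp [wsum]
  | cons i w ih =>
      rw [wsum_cons, ih, List.length_cons]
      split <;> omega

lemma degW_eq_wsum (w : Word) : degW w = wsum 2 1 w + 1 := by
  simp [degW, wsum]

lemma one_le_degW (w : Word) : 1 ≤ degW w := by
  rw [degW_eq_wsum]; omega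

lemma degW_cons (i : Fin 2) (w : Word) :
    degW (i :: w) = (if i = 0 then 2 else 1) + degW w := by
  simp only [degW_eq_wsum, wsum_cons]; omega

lemma degW_concat (w : Word) (i : Fin 2) :
    degW (w ++ [i]) = degW w + (if i = 0 then 2 else 1) := by
  rcases fin2_eq i with rfl | rfl <;> simp [degW, List.count_append] <;> ring

lemma eq_nil_of_wsum21_eq_zero {w : Word} (h : wsum 2 1 w = 0) : w = [] := by
  cases w with
  | nil => rfl
  | cons i v => rw [wsum_cons] at h; have := wt_pos i; split at h <;> omega

end Words

section ShuffleBasics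

lemma shuffleFn_nil (c f : Series) : shuffleFn c f [] = c [] * f [] := rfl

lemma shuffleFn_cons (c f : Series) (i : Fin 2) (w : Word) :
    shuffleFn c f (i :: w) = shuffleFn (lshift i c) f w + shuffleFn c (lshift i f) w := rfl

lemma shuffleFn_zero_left (w : Word) : ∀ f : Series, shuffleFn (fun _ => 0) f w = 0 := by
  induction w with
  | nil => intro f; simp [shuffleFn_nil]
  | cons i w ih =>
      intro f
      rw [shuffleFn_cons]
      have h : lshift i (fun _ => (0:ℝ)) = fun _ => (0:ℝ) := rfl
      rw [h, ih, ih]; ring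

lemma shuffleFn_zero_right (w : Word) : ∀ c : Series, shuffleFn c (fun _ => 0) w = 0 := by
  induction w with
  | nil => intro c; simp [shuffleFn_nil]
  | cons i w ih =>
      intro c
      rw [shuffleFn_cons]
      have h : lshift i (fun _ => (0:ℝ)) = fun _ => (0:ℝ) := rfl
      rw [h, ih, ih]; ring

lemma shuffleFn_smul_left (w : Word) : ∀ (c f : Series) (r : ℝ),
    shuffleFn (fun v => r * c v) f w = r * shuffleFn c f w := by
  induction w with
  | nil => intro c f r; simp [shuffleFn_nil]; ring
  | cons i w ih =>
      intro c f r
      rw [shuffleFn_cons, shuffleFn_cons]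
      have h : lshift i (fun v => r * c v) = fun v => r * (lshift i c) v := rfl
      rw [h, ih, ih]; ring

lemma shuffleFn_smul_right (w : Word) : ∀ (c f : Series) (r : ℝ),
    shuffleFn c (fun v => r * f v) w = r * shuffleFn c f w := by
  induction w with
  | nil => intro c f r; simp [shuffleFn_nil]; ring
  | cons i w ih =>
      intro c f r
      rw [shuffleFn_cons, shuffleFn_cons]
      have h : lshift i (fun v => r * f v) = fun v => r * (lshift i f) v := rfl
      rw [h, ih, ih]; ring

lemma shuffleFn_add_right (w : Word) : ∀ (c f g : Series),
    shuffleFn c (fun v => f v + g v) w = shuffleFn c f w + shuffleFn c g w := by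
  induction w with
  | nil => intro c f g; simp [shuffleFn_nil]; ring
  | cons i w ih =>
      intro c f g
      rw [shuffleFn_cons, shuffleFn_cons, shuffleFn_cons]
      have h : lshift i (fun v => f v + g v) = fun v => (lshift i f) v + (lshift i g) v := rfl
      rw [h, ih, ih]; ring

lemma shuffleFn_sum_right {α : Type*} (s : Finset α) (w : Word) (c : Series) (g : α → Series) :
    shuffleFn c (fun v => ∑ a ∈ s, g a v) w = ∑ a ∈ s, shuffleFn c (g a) w := by
  classical
  induction s using Finset.induction_on with
  | empty => simpa using shuffleFn_zero_right w c
  | @insert a s hna ih =>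
      have h : (fun v => ∑ x ∈ insert a s, g x v) = fun v => g a v + ∑ x ∈ s, g x v := by
        funext v; rw [Finset.sum_insert hna]
      rw [h, shuffleFn_add_right, ih, Finset.sum_insert hna]

lemma shuffleFn_congr_right (w : Word) : ∀ (c f g : Series),
    (∀ v, v.length ≤ w.length → f v = g v) → shuffleFn c f w = shuffleFn c g w := by
  induction w with
  | nil => intro c f g h; rw [shuffleFn_nil, shuffleFn_nil, h [] (by simp)]
  | cons i w ih =>
      intro c f g h
      rw [shuffleFn_cons, shuffleFn_cons]
      rw [ih (lshift i c) f g (fun v hv => h v (by simp; omega)),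
        ih c (lshift i f) (lshift i g) (fun v hv => h (i :: v) (by simp; omega))]

lemma shuffleFn_neg_left (w : Word) (c f : Series) :
    shuffleFn (-c) f w = - shuffleFn c f w := by
  have h : (-c) = fun v => (-1 : ℝ) * c v := by funext v; simp
  rw [h, shuffleFn_smul_left]; ring

end ShuffleBasics

section Support

lemma shuffleFn_ne_zero_wsum (a b : ℕ) (w : Word) : ∀ (c f : Series) (m p : ℕ),
    (∀ v, c v ≠ 0 → m ≤ wsum a b v) → (∀ v, f v ≠ 0 → p ≤ wsum a b v) →
    shuffleFn c f w ≠ 0 → m + p ≤ wsum a b w := by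
  induction w with
  | nil =>
      intro c f m p hc hf hne
      rw [shuffleFn_nil] at hne
      have h1 : c [] ≠ 0 := fun h => hne (by rw [h]; ring)
      have h2 : f [] ≠ 0 := fun h => hne (by rw [h]; ring)
      have := hc [] h1; have := hf [] h2
      rw [wsum_nil] at *; omega
  | cons i w ih =>
      intro c f m p hc hf hne
      rw [shuffleFn_cons] at hne
      rw [wsum_cons]
      set t : ℕ := if i = 0 then a else b with ht
      have hcase : shuffleFn (lshift i c) f w ≠ 0 ∨ shuffleFn c (lshift i f) w ≠ 0 := by
        by_contra hcon
        push_neg at hcon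
        exact hne (by rw [hcon.1, hcon.2]; ring)
      rcases hcase with h | h
      · have h1 : ∀ v, (lshift i c) v ≠ 0 → m - t ≤ wsum a b v := by
          intro v hv
          have := hc (i :: v) hv
          rw [wsum_cons, ← ht] at this; omega
        have := ih (lshift i c) f (m - t) p h1 hf h
        omega
      · have h1 : ∀ v, (lshift i f) v ≠ 0 → p - t ≤ wsum a b v := by
          intro v hv
          have := hf (i :: v) hv
          rw [wsum_cons, ← ht] at this; omega
        have := ih c (lshift i f) m (p - t) hc h1 h
        omega

lemma one_ne_zero_wsum (a b : ℕ) : ∀ v : Word, one v ≠ 0 → 0 ≤ wsum a b v := by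
  intro v _; omega

lemma phi_nil (d : Series) (e : Series) : phi d [] e = e := rfl

lemma phi_cons (d : Series) (i : Fin 2) (ξ : Word) (e : Series) :
    phi d (i :: ξ) e = phiLetter d i (phi d ξ e) := rfl

lemma phi_ne_zero_wsum (a b : ℕ) (hba : b ≤ a) (d : Series) :
    ∀ (ξ v : Word), phi d ξ one v ≠ 0 → wsum a b ξ ≤ wsum a b v := by
  intro ξ
  induction ξ with
  | nil => intro v _; rw [wsum_nil]; omega
  | cons i ξ ih =>
      have e0 : (if (0:Fin 2) = 0 then a else b) = a := if_pos rfl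
      have e1 : (if (1:Fin 2) = 0 then a else b) = b := if_neg (by decide)
      intro v hv
      rw [phi_cons] at hv
      rw [wsum_cons]
      rcases fin2_eq i with rfl | rfl
      · rw [e0]
        simp only [phiLetter, if_pos rfl, ite_true, eq_self_iff_true] at hv
        cases v with
        | nil => exact absurd rfl hv
        | cons j v' =>
            simp only [lconcat] at hv
            by_cases hj : j = (0 : Fin 2)
            · rw [if_pos hj] at hv
              have hle := ih v' hv
              subst hj
              rw [wsum_cons, e0]
              omega
            · rw [if_neg hj] at hv; exact absurd rfl hv
      · rw [e1]
        simp only [phiLetter, if_neg (by decide : ¬ (1:Fin 2) = 0), ite_true, ite_false] at hv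
        cases v with
        | nil => exact (hv (show (0:ℝ) + 0 = 0 by norm_num)).elim
        | cons j v' =>
            have hv' : lconcat 1 (phi d ξ one) (j :: v') ≠ 0 ∨
                lconcat 0 (sh d (phi d ξ one)) (j :: v') ≠ 0 := by
              by_contra hcon
              push_neg at hcon
              rw [Pi.add_apply, hcon.1, hcon.2] at hv
              exact hv (by ring)
            rcases hv' with h | h
            · simp only [lconcat] at h
              by_cases hj : j = (1 : Fin 2)
              · rw [if_pos hj] at h
                have hle := ih v' h
                subst hj
                rw [wsum_cons, if_neg (by decide : ¬ (1:Fin 2) = 0)]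
                omega
              · rw [if_neg hj] at h; exact absurd rfl h
            · simp only [lconcat] at h
              by_cases hj : j = (0 : Fin 2)
              · rw [if_pos hj] at h
                have hsh := shuffleFn_ne_zero_wsum a b v' d (phi d ξ one) 0 (wsum a b ξ)
                  (fun v _ => by omega) (fun v hv => ih v hv) h
                subst hj
                rw [wsum_cons, e0]
                omega
              · rw [if_neg hj] at h; exact absurd rfl h

lemma phi_eq_zero_of_length {d : Series} {ξ v : Word} (h : v.length < ξ.length) :
    phi d ξ one v = 0 := by
  by_contra hne
  have := phi_ne_zero_wsum 1 1 le_rfl d ξ v hne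
  rw [wsum_one_one, wsum_one_one] at this
  omega

lemma phi_diag (d : Series) :
    ∀ (ξ η : Word), wsum 2 1 η ≤ wsum 2 1 ξ →
      phi d ξ one η = if ξ = η then 1 else 0 := by
  intro ξ
  induction ξ with
  | nil =>
      intro η hη
      rw [wsum_nil, Nat.le_zero] at hη
      have : η = [] := eq_nil_of_wsum21_eq_zero hη
      subst this
      simp [phi_nil, one, ind]
  | cons i ξ ih =>
      have e0 : ∀ u : Word, (if (0:Fin 2) = 0 then (2:ℕ) else 1) + wsum 2 1 u = 2 + wsum 2 1 u := by
        intro u; rw [if_pos rfl]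
      have e1 : ∀ u : Word, (if (1:Fin 2) = 0 then (2:ℕ) else 1) + wsum 2 1 u = 1 + wsum 2 1 u := by
        intro u; rw [if_neg (by decide : ¬ (1:Fin 2) = 0)]
      intro η hη
      rw [phi_cons]
      rcases fin2_eq i with rfl | rfl
      · simp only [phiLetter, if_pos rfl, ite_true, eq_self_iff_true]
        cases η with
        | nil =>
            rw [show lconcat 0 (phi d ξ one) [] = 0 from rfl, if_neg (by simp)]
        | cons j η' =>
            simp only [lconcat]
            rcases fin2_eq j with rfl | rfl
            · rw [if_pos rfl]
              rw [wsum_cons, wsum_cons, e0, e0] at hη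
              rw [ih η' (by omega)]
              by_cases hh : ξ = η'
              · subst hh; simp
              · rw [if_neg hh, if_neg (by simp [hh])]
            · have hne : ¬ ((0:Fin 2) :: ξ = 1 :: η') := by
                intro hcon; injection hcon with h1 h2; exact absurd h1 (by decide)
              rw [if_neg (by decide : ¬ (1:Fin 2) = 0), if_neg hne]
      · simp only [phiLetter, if_neg (by decide : ¬ (1:Fin 2) = 0), ite_true, ite_false]
        cases η with
        | nil =>
            rw [Pi.add_apply, show lconcat 1 (phi d ξ one) [] = 0 from rfl,
              show lconcat 0 (sh d (phi d ξ one)) [] = 0 from rfl, if_neg (by simp)]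
            norm_num
        | cons j η' =>
            rw [Pi.add_apply]
            simp only [lconcat]
            rcases fin2_eq j with rfl | rfl
            · rw [if_neg (by decide : ¬ (0:Fin 2) = 1), if_pos rfl, zero_add]
              rw [wsum_cons, wsum_cons, e0, e1] at hη
              have hz : sh d (phi d ξ one) η' = 0 := by
                by_contra hne
                have := shuffleFn_ne_zero_wsum 2 1 η' d (phi d ξ one) 0 (wsum 2 1 ξ)
                  (fun v _ => by omega) (fun v hv => phi_ne_zero_wsum 2 1 (by omega) d ξ v hv) hne
                omega
              have hne2 : ¬ ((1:Fin 2) :: ξ = 0 :: η') := by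
                intro hcon; injection hcon with h1 h2; exact absurd h1 (by decide)
              rw [hz, if_neg hne2]
            · rw [if_pos rfl, if_neg (by decide : ¬ (1:Fin 2) = 0), add_zero]
              rw [wsum_cons, wsum_cons, e1, e1] at hη
              rw [ih η' (by omega)]
              by_cases hh : ξ = η'
              · subst hh; simp
              · rw [if_neg hh, if_neg (by simp [hh])]

end Support

end Paper

namespace Paper

section Finsets

lemma mem_wordsLen {k : ℕ} {ξ : Word} : ξ ∈ wordsLen k ↔ ξ.length = k := by
  constructor
  · intro h
    simp only [wordsLen, Finset.mem_image, Finset.mem_univ, true_and] at h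
    obtain ⟨f, rfl⟩ := h
    simp
  · rintro rfl
    simp only [wordsLen, Finset.mem_image, Finset.mem_univ, true_and]
    exact ⟨ξ.get, List.ofFn_get ξ⟩

/-- all words of length at most `n` -/
def allW (n : ℕ) : Finset Word := (Finset.range (n + 1)).biUnion wordsLen

lemma mem_allW {n : ℕ} {ξ : Word} : ξ ∈ allW n ↔ ξ.length ≤ n := by
  simp only [allW, Finset.mem_biUnion, Finset.mem_range, mem_wordsLen]
  constructor
  · rintro ⟨k, hk, rfl⟩; omega
  · intro h; exact ⟨ξ.length, by omega, rfl⟩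

lemma allW_zero : allW 0 = {[]} := by
  ext ξ
  simp [mem_allW, List.length_eq_zero_iff]

lemma allW_succ (n : ℕ) :
    allW (n + 1)
      = insert [] (((allW n).image (List.cons 0)) ∪ ((allW n).image (List.cons 1))) := by
  ext ξ
  simp only [mem_allW, Finset.mem_insert, Finset.mem_union, Finset.mem_image]
  constructor
  · intro h
    cases ξ with
    | nil => exact Or.inl rfl
    | cons i ρ =>
        refine Or.inr ?_
        have hρ : ρ.length ≤ n := by simp at h; omega
        rcases fin2_eq i with rfl | rfl
        · exact Or.inl ⟨ρ, hρ, rfl⟩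
        · exact Or.inr ⟨ρ, hρ, rfl⟩
  · rintro (rfl | ⟨ρ, hρ, rfl⟩ | ⟨ρ, hρ, rfl⟩) <;>
      simp_all [mem_allW]

lemma sum_allW_succ {M : Type*} [AddCommMonoid M] (n : ℕ) (f : Word → M) :
    ∑ ξ ∈ allW (n + 1), f ξ
      = f [] + ((∑ ρ ∈ allW n, f (0 :: ρ)) + ∑ ρ ∈ allW n, f (1 :: ρ)) := by
  classical
  rw [allW_succ, Finset.sum_insert, Finset.sum_union, Finset.sum_image, Finset.sum_image]
  · intro a _ b _ h; injection h
  · intro a _ b _ h; injection h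
  · rw [Finset.disjoint_left]
    rintro x hx hy
    simp only [Finset.mem_image] at hx hy
    obtain ⟨ρ, _, rfl⟩ := hx
    obtain ⟨ρ', _, h⟩ := hy
    injection h with h1 _
    exact (by decide : ¬ ((1:Fin 2) = 0)) h1
  · simp only [Finset.mem_union, Finset.mem_image]
    rintro (⟨ρ, _, h⟩ | ⟨ρ, _, h⟩) <;> exact List.cons_ne_nil _ _ h

lemma mcomp_eq_sum (c d : Series) (w : Word) :
    mcomp c d w = ∑ ξ ∈ allW w.length, c ξ * phi d ξ one w := by
  have : mcomp c d w = ∑' η : Word, c η * phi d η one w := rfl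
  rw [this]
  apply tsum_eq_sum
  intro ξ hξ
  have h : ¬ ξ.length ≤ w.length := fun hc => hξ (mem_allW.mpr hc)
  rw [phi_eq_zero_of_length (by omega), mul_zero]

lemma sum_allW_of_le {n : ℕ} {w : Word} (h : w.length ≤ n) (c d : Series) :
    ∑ ξ ∈ allW n, c ξ * phi d ξ one w = ∑ ξ ∈ allW w.length, c ξ * phi d ξ one w := by
  symm
  apply Finset.sum_subset
  · intro ξ hξ
    rw [mem_allW] at *
    omega
  · intro ξ _ hξ
    have hl : ¬ ξ.length ≤ w.length := fun hc => hξ (mem_allW.mpr hc)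
    rw [phi_eq_zero_of_length (by omega), mul_zero]

end Finsets

section PolyCoeff

/-- series with coefficients in `H` -/
abbrev SeriesH : Type := Word → H

def lshiftH (i : Fin 2) (c : SeriesH) : SeriesH := fun w => c (i :: w)

def lconcatH (i : Fin 2) (c : SeriesH) : SeriesH := fun w =>
  match w with
  | [] => 0
  | j :: v => if j = i then c v else 0

def shuffleFnH : SeriesH → SeriesH → Word → H
  | c, d, [] => c [] * d []
  | c, d, i :: w => shuffleFnH (lshiftH i c) d w + shuffleFnH c (lshiftH i d) w

def oneH : SeriesH := fun w => if w = [] then 1 else 0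

/-- the generic series `d`, with `⟨d,w⟩ = a_w` -/
def Dg : SeriesH := fun w => aw w

/-- `φ_d(ξ)(1)` with polynomial coefficients in the generic `d` -/
def phiH : Word → SeriesH
  | [] => oneH
  | i :: ξ => if i = 0 then lconcatH 0 (phiH ξ)
      else lconcatH 1 (phiH ξ) + lconcatH 0 (shuffleFnH Dg (phiH ξ))

lemma evalS_shuffleFnH (d : Series) : ∀ (w : Word) (cH fH : SeriesH),
    evalS d (shuffleFnH cH fH w)
      = shuffleFn (fun v => evalS d (cH v)) (fun v => evalS d (fH v)) w := by
  intro w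
  induction w with
  | nil => intro cH fH; rw [show shuffleFnH cH fH [] = cH [] * fH [] from rfl,
      shuffleFn_nil, map_mul]
  | cons i w ih =>
      intro cH fH
      rw [show shuffleFnH cH fH (i :: w)
          = shuffleFnH (lshiftH i cH) fH w + shuffleFnH cH (lshiftH i fH) w from rfl,
        shuffleFn_cons, map_add, ih, ih]
      rfl

lemma evalS_phiH (d : Series) : ∀ ξ : Word,
    (fun w => evalS d (phiH ξ w)) = phi d ξ one := by
  intro ξ
  induction ξ with
  | nil =>
      funext w
      rw [phi_nil]
      by_cases h : w = [] <;> simp [phiH, oneH, one, ind, h]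
  | cons i ξ ih =>
      funext w
      rw [phi_cons]
      rcases fin2_eq i with rfl | rfl
      · rw [show phiH (0 :: ξ) = lconcatH 0 (phiH ξ) from by rw [phiH]; rw [if_pos rfl]]
        simp only [phiLetter, if_pos rfl, ite_true, eq_self_iff_true]
        cases w with
        | nil => simp [lconcatH, lconcat]
        | cons j v =>
            simp only [lconcatH, lconcat]
            by_cases hj : j = (0:Fin 2)
            · rw [if_pos hj, if_pos hj, ← ih]
            · rw [if_neg hj, if_neg hj, map_zero]
      · rw [show phiH (1 :: ξ) = lconcatH 1 (phiH ξ) + lconcatH 0 (shuffleFnH Dg (phiH ξ))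
            from by rw [phiH]; rw [if_neg (by decide)]]
        simp only [phiLetter, if_neg (show ¬(1:Fin 2) = 0 by decide)]
        rw [Pi.add_apply, Pi.add_apply, map_add]
        congr 1
        · cases w with
          | nil => simp [lconcatH, lconcat]
          | cons j v =>
              simp only [lconcatH, lconcat]
              by_cases hj : j = (1:Fin 2)
              · rw [if_pos hj, if_pos hj, ← ih]
              · rw [if_neg hj, if_neg hj, map_zero]
        · cases w with
          | nil => simp [lconcatH, lconcat]
          | cons j v =>
              simp only [lconcatH, lconcat]
              by_cases hj : j = (0:Fin 2)
              · rw [if_pos hj, if_pos hj]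
                rw [evalS_shuffleFnH]
                have h1 : (fun u => evalS d (Dg u)) = d := by
                  funext u; simp [Dg, aw, evalS]
                have h2 : (fun u => evalS d (phiH ξ u)) = phi d ξ one := ih
                rw [h1, h2]
                rfl
              · rw [if_neg hj, if_neg hj, map_zero]

end PolyCoeff

section Coproduct

lemma evalS_aw (c : Series) (η : Word) : evalS c (aw η) = c η := by
  simp [evalS, aw]

lemma evalS_eq_eval (c : Series) (p : H) : evalS c p = MvPolynomial.eval c p := by
  rw [evalS, MvPolynomial.aeval_def, Algebra.algebraMap_self, MvPolynomial.eval₂_id]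

lemma evalPair_tmul (c d : Series) (p q : H) :
    evalPair c d (p ⊗ₜ[ℝ] q) = evalS c p * evalS d q := by
  simp [evalPair, TensorProduct.map_tmul, LinearMap.mul'_apply]

/-- the explicit value of the coproduct on the coordinate function `a_η` -/
def Del (η : Word) : H ⊗[ℝ] H :=
  (∑ ξ ∈ allW η.length, aw ξ ⊗ₜ[ℝ] phiH ξ η) + (1 : H) ⊗ₜ[ℝ] aw η

lemma evalPair_Del (c d : Series) (η : Word) :
    evalPair c d (Del η) = mcomp c d η + d η := by
  rw [Del, map_add, map_sum, mcomp_eq_sum]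
  congr 1
  · apply Finset.sum_congr rfl
    intro ξ _
    rw [evalPair_tmul, evalS_aw, congrFun (evalS_phiH d ξ) η]
  · rw [evalPair_tmul, evalS_aw, map_one, one_mul]

set_option synthInstance.maxHeartbeats 1000000 in
set_option maxHeartbeats 1000000 in
lemma evalPair_eq_eval (c d : Series) (t : H ⊗[ℝ] H) :
    evalPair c d t
      = MvPolynomial.eval d
          (MvPolynomial.map (evalS c : H →+* ℝ)
            ((MvPolynomial.algebraTensorAlgEquiv ℝ H) t)) := by
  induction t with
  | zero => simp
  | add x y hx hy => simp only [map_add, hx, hy]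
  | tmul p q =>
      rw [evalPair_tmul, MvPolynomial.algebraTensorAlgEquiv_tmul,
        MvPolynomial.smul_eq_C_mul, map_mul, MvPolynomial.map_C, map_mul,
        MvPolynomial.eval_C, MvPolynomial.map_map, AlgHom.comp_algebraMap,
        Algebra.algebraMap_self, MvPolynomial.map_id, evalS_eq_eval d q]
      rfl

set_option synthInstance.maxHeartbeats 1000000 in
set_option maxHeartbeats 1000000 in
lemma evalPair_injective (t : H ⊗[ℝ] H) (h : ∀ c d : Series, evalPair c d t = 0) : t = 0 := by
  have h2 : (MvPolynomial.algebraTensorAlgEquiv ℝ H) t = 0 := by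
    apply MvPolynomial.ext
    intro m
    have h3 : ∀ c : Series,
        MvPolynomial.map (evalS c : H →+* ℝ) ((MvPolynomial.algebraTensorAlgEquiv ℝ H) t) = 0 := by
      intro c
      apply MvPolynomial.funext
      intro d
      rw [← evalPair_eq_eval, h c d, map_zero]
    have h4 : ∀ c : Series,
        MvPolynomial.eval c (MvPolynomial.coeff m ((MvPolynomial.algebraTensorAlgEquiv ℝ H) t)) = 0 := by
      intro c
      have := congrArg (MvPolynomial.coeff m) (h3 c)
      rw [MvPolynomial.coeff_map] at this
      rw [← evalS_eq_eval]
      simpa using this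
    have h5 := MvPolynomial.funext (p := MvPolynomial.coeff m ((MvPolynomial.algebraTensorAlgEquiv ℝ H) t)) (q := 0) (by intro x; rw [h4 x, map_zero])
    simp [h5]
  have := congrArg (MvPolynomial.algebraTensorAlgEquiv ℝ H).symm h2
  simpa using this

lemma Delta_aw {Δ : H →ₐ[ℝ] (H ⊗[ℝ] H)} (hΔ : IsFBCoproduct Δ) (η : Word) :
    Δ (aw η) = Del η := by
  have h : ∀ c d : Series, evalPair c d (Δ (aw η) - Del η) = 0 := by
    intro c d
    rw [map_sub, hΔ η c d, evalPair_Del, sub_self]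
  have := evalPair_injective _ h
  exact sub_eq_zero.mp this

lemma counit_aw (η : Word) : counit (aw η) = 0 := by
  simp [counit, evalS, aw]

lemma S_one {Δ : H →ₐ[ℝ] (H ⊗[ℝ] H)} {S : H →ₗ[ℝ] H} (hS : IsAntipode Δ S) :
    S (1 : H) = 1 := by
  have h := hS.1 1
  have hΔ1 : Δ (1 : H) = (1 : H) ⊗ₜ[ℝ] (1 : H) := by
    rw [map_one, Algebra.TensorProduct.one_def]
  rw [hΔ1, TensorProduct.map_tmul, LinearMap.mul'_apply, LinearMap.id_apply, mul_one] at h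
  have hc : counit (1 : H) = 1 := map_one counit
  rw [hc, one_smul] at h
  exact h

/-- The fundamental identity: the antipode coefficients form a left composition inverse. -/
lemma star_identity {Δ : H →ₐ[ℝ] (H ⊗[ℝ] H)} (hΔ : IsFBCoproduct Δ)
    {S : H →ₗ[ℝ] H} (hS : IsAntipode Δ S) (η : Word) :
    ∑ ξ ∈ allW η.length, (evalS (-ferfera) (S (aw ξ))) * phi (-ferfera) ξ one η
      = ferfera η := by
  have h := hS.1 (aw η)
  rw [Delta_aw hΔ η, counit_aw, zero_smul, Del, map_add, map_add, map_sum] at h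
  simp only [TensorProduct.map_tmul, LinearMap.id_apply] at h
  rw [map_sum] at h
  simp only [LinearMap.mul'_apply] at h
  have h2 := congrArg (evalS (-ferfera)) h
  rw [map_add, map_sum, map_zero] at h2
  simp only [map_mul] at h2
  rw [S_one hS, map_one, one_mul, evalS_aw] at h2
  have h3 : ∀ ξ ∈ allW η.length,
      evalS (-ferfera) (S (aw ξ)) * evalS (-ferfera) (phiH ξ η)
        = evalS (-ferfera) (S (aw ξ)) * phi (-ferfera) ξ one η := by
    intro ξ _
    rw [congrFun (evalS_phiH (-ferfera) ξ) η]
  rw [Finset.sum_congr rfl h3] at h2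
  have : (-ferfera) η = - ferfera η := rfl
  rw [this] at h2
  linarith [h2]

end Coproduct

end Paper

namespace Paper

section Combinatorics

/-- the series `Σ_k t(t+1)⋯(t+k−1)·x1^k` -/
def Tser (t : ℕ) : Series := fun w =>
  if w = List.replicate w.length 1 then (t.ascFactorial w.length : ℝ) else 0

lemma Tser_nil (t : ℕ) : Tser t [] = 1 := by simp [Tser]

lemma Tser_cons_zero (t : ℕ) (w : Word) : Tser t ((0:Fin 2) :: w) = 0 := by
  rw [Tser, if_neg]
  intro h
  rw [List.length_cons, List.replicate_succ] at h
  injection h with h1 _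
  exact (by decide : ¬ ((0:Fin 2) = 1)) h1

lemma Tser_cons_one (t : ℕ) (w : Word) :
    Tser t ((1:Fin 2) :: w) = (t : ℝ) * Tser (t + 1) w := by
  have hasc : t.ascFactorial (w.length + 1) = t * (t + 1).ascFactorial w.length := by
    rw [Nat.ascFactorial_succ]
    have := Nat.succ_ascFactorial t w.length
    rw [Nat.succ_eq_add_one] at this
    omega
  simp only [Tser, List.length_cons, List.replicate_succ, List.cons.injEq, true_and]
  split_ifs with h
  · rw [hasc]; push_cast; ring
  · ring

lemma lshift_zero_Tser (t : ℕ) : lshift 0 (Tser t) = fun _ => (0:ℝ) := by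
  funext v; exact Tser_cons_zero t v

lemma lshift_one_Tser (t : ℕ) : lshift 1 (Tser t) = fun v => (t:ℝ) * Tser (t+1) v := by
  funext v; exact Tser_cons_one t v

lemma ferfera_eq_Tser : ferfera = Tser 1 := by
  funext w
  simp [ferfera, Tser, Nat.one_ascFactorial]

lemma shuffleFn_Tser (w : Word) : ∀ (a b : ℕ), 1 ≤ a → 1 ≤ b →
    shuffleFn (Tser a) (Tser b) w = Tser (a + b) w := by
  induction w with
  | nil => intro a b _ _; rw [shuffleFn_nil, Tser_nil, Tser_nil, Tser_nil]; ring
  | cons i w ih =>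
      intro a b ha hb
      rw [shuffleFn_cons]
      rcases fin2_eq i with rfl | rfl
      · rw [lshift_zero_Tser, lshift_zero_Tser, shuffleFn_zero_left, shuffleFn_zero_right,
          Tser_cons_zero]
        ring
      · rw [lshift_one_Tser, lshift_one_Tser, shuffleFn_smul_left, shuffleFn_smul_right,
          ih (a+1) b (by omega) hb, ih a (b+1) ha (by omega), Tser_cons_one]
        have e1 : a + 1 + b = a + b + 1 := by omega
        have e2 : a + (b + 1) = a + b + 1 := by omega
        rw [e1, e2]
        push_cast
        ring

/-- Devlin's coefficients, shifted by `s`: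
`ehs s η = ∏_{k<|η|} (deg(η.take k) + s)`. -/
def ehs (s : ℕ) : Series := fun η =>
  ∏ k ∈ Finset.range η.length, ((degW (η.take k) + s : ℕ) : ℝ)

lemma ehs_nil (s : ℕ) : ehs s [] = 1 := by simp [ehs]

lemma ehs_cons (s : ℕ) (i : Fin 2) (η : Word) :
    ehs s (i :: η) = ((1 + s : ℕ) : ℝ) * ehs (s + (if i = 0 then 2 else 1)) η := by
  have h0 : ∀ j : Fin 2, ((degW (List.take 0 (j :: η)) + s : ℕ) : ℝ) = ((1 + s : ℕ) : ℝ) := by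
    intro j; norm_num [degW]
  rcases fin2_eq i with rfl | rfl
  · rw [if_pos rfl]
    simp only [ehs, List.length_cons]
    rw [Finset.prod_range_succ']
    have h1 : ∀ k ∈ Finset.range η.length,
        ((degW (List.take (k+1) ((0:Fin 2) :: η)) + s : ℕ) : ℝ)
          = ((degW (List.take k η) + (s + 2) : ℕ) : ℝ) := by
      intro k _
      rw [List.take_succ_cons, degW_cons, if_pos rfl]
      congr 1
      omega
    rw [Finset.prod_congr rfl h1, h0, mul_comm]
  · rw [if_neg (by decide : ¬ (1:Fin 2) = 0)]
    simp only [ehs, List.length_cons]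
    rw [Finset.prod_range_succ']
    have h1 : ∀ k ∈ Finset.range η.length,
        ((degW (List.take (k+1) ((1:Fin 2) :: η)) + s : ℕ) : ℝ)
          = ((degW (List.take k η) + (s + 1) : ℕ) : ℝ) := by
      intro k _
      rw [List.take_succ_cons, degW_cons, if_neg (by decide : ¬ (1:Fin 2) = 0)]
      congr 1
      omega
    rw [Finset.prod_congr rfl h1, h0, mul_comm]

lemma ehs_cons0 (s : ℕ) (η : Word) :
    ehs s ((0:Fin 2) :: η) = ((1 + s : ℕ) : ℝ) * ehs (s + 2) η := by
  rw [ehs_cons, if_pos rfl]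

lemma ehs_cons1 (s : ℕ) (η : Word) :
    ehs s ((1:Fin 2) :: η) = ((1 + s : ℕ) : ℝ) * ehs (s + 1) η := by
  rw [ehs_cons, if_neg (by decide : ¬ (1:Fin 2) = 0)]

lemma ehs_concat (η : Word) (i : Fin 2) :
    ehs 0 (η ++ [i]) = ehs 0 η * (degW η : ℝ) := by
  simp only [ehs, List.length_append, List.length_singleton]
  rw [Finset.prod_range_succ]
  congr 1
  · apply Finset.prod_congr rfl
    intro k hk
    rw [List.take_append_of_le_length (le_of_lt (Finset.mem_range.mp hk))]
  · rw [List.take_left]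
    norm_num

/-- Main combinatorial identity: `ê_s ∘̃ (−c) = Σ_k (s+1)⋯(s+k) x1^k`. -/
lemma main_sum : ∀ (n : ℕ) (η : Word), η.length ≤ n → ∀ s : ℕ,
    ∑ ξ ∈ allW η.length, ehs s ξ * phi (-ferfera) ξ one η = Tser (s + 1) η := by
  have base : ∀ s : ℕ, ∑ ξ ∈ allW ([] : Word).length, ehs s ξ * phi (-ferfera) ξ one [] = Tser (s + 1) [] := by
    intro s
    simp only [List.length_nil]
    rw [allW_zero, Finset.sum_singleton, ehs_nil, phi_nil]
    rw [show one [] = 1 from rfl, Tser_nil]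
    ring
  intro n
  induction n with
  | zero =>
      intro η hη s
      have : η = [] := by cases η <;> simp_all
      subst this
      exact base s
  | succ n ih =>
      intro η hη s
      cases η with
      | nil => exact base s
      | cons i η' =>
          have hlen : η'.length ≤ n := by simp at hη; omega
          rw [List.length_cons, sum_allW_succ]
          rw [ehs_nil, phi_nil, one_mul]
          rw [show one (i :: η') = 0 from by simp [one, ind]]
          rw [zero_add]
          have hphi0 : ∀ ρ : Word, phi (-ferfera) ((0:Fin 2) :: ρ) one (i :: η')
              = if i = 0 then phi (-ferfera) ρ one η' else 0 := fun ρ => rfl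
          have hphi1 : ∀ ρ : Word, phi (-ferfera) ((1:Fin 2) :: ρ) one (i :: η')
              = (if i = 1 then phi (-ferfera) ρ one η' else 0)
                + (if i = 0 then sh (-ferfera) (phi (-ferfera) ρ one) η' else 0) := fun ρ => rfl
          rcases fin2_eq i with rfl | rfl
          · simp only [hphi0, hphi1, if_pos rfl,
              if_neg (show ¬(0:Fin 2) = 1 by decide), zero_add, ite_true, ite_false]
            have hsum1 : ∑ ρ ∈ allW η'.length, ehs s ((0:Fin 2) :: ρ) * phi (-ferfera) ρ one η'
                = ((1 + s : ℕ) : ℝ) * Tser (s + 3) η' := by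
              have h := ih η' hlen (s + 2)
              rw [show s + 2 + 1 = s + 3 from rfl] at h
              rw [← h, Finset.mul_sum]
              apply Finset.sum_congr rfl
              intro ρ _
              rw [ehs_cons0]
              ring
            have hsum2 : ∑ ρ ∈ allW η'.length,
                ehs s ((1:Fin 2) :: ρ) * sh (-ferfera) (phi (-ferfera) ρ one) η'
                = ((1 + s : ℕ) : ℝ) * (- Tser (s + 3) η') := by
              have step1 : ∀ ρ ∈ allW η'.length,
                  ehs s ((1:Fin 2) :: ρ) * sh (-ferfera) (phi (-ferfera) ρ one) η'
                  = ((1 + s : ℕ) : ℝ) *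
                      shuffleFn (-ferfera) (fun v => ehs (s+1) ρ * phi (-ferfera) ρ one v) η' := by
                intro ρ _
                rw [ehs_cons1]
                rw [show sh (-ferfera) (phi (-ferfera) ρ one) η'
                    = shuffleFn (-ferfera) (phi (-ferfera) ρ one) η' from rfl]
                rw [shuffleFn_smul_right]
                ring
              rw [Finset.sum_congr rfl step1, ← Finset.mul_sum]
              congr 1
              rw [← shuffleFn_sum_right]
              have hcongr : shuffleFn (-ferfera)
                  (fun v => ∑ ρ ∈ allW η'.length, ehs (s+1) ρ * phi (-ferfera) ρ one v) η'
                  = shuffleFn (-ferfera) (Tser (s + 2)) η' := by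
                apply shuffleFn_congr_right
                intro v hv
                rw [sum_allW_of_le (by omega) (ehs (s+1)) (-ferfera)]
                have h := ih v (by omega) (s + 1)
                rw [show s + 1 + 1 = s + 2 from rfl] at h
                rw [h]
              rw [hcongr, shuffleFn_neg_left, ferfera_eq_Tser,
                shuffleFn_Tser η' 1 (s+2) (by omega) (by omega)]
              rw [show 1 + (s + 2) = s + 3 from by omega]
            rw [hsum1, hsum2, Tser_cons_zero]
            ring
          · simp only [hphi0, hphi1, if_pos rfl,
              if_neg (show ¬(1:Fin 2) = 0 by decide), add_zero, ite_true, ite_false,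
              mul_zero, Finset.sum_const_zero, zero_add]
            have hsum1 : ∑ ρ ∈ allW η'.length, ehs s ((1:Fin 2) :: ρ) * phi (-ferfera) ρ one η'
                = ((1 + s : ℕ) : ℝ) * Tser (s + 2) η' := by
              have h := ih η' hlen (s + 1)
              rw [show s + 1 + 1 = s + 2 from rfl] at h
              rw [← h, Finset.mul_sum]
              apply Finset.sum_congr rfl
              intro ρ _
              rw [ehs_cons1]
              ring
            rw [hsum1, Tser_cons_one]
            push_cast
            ring

end Combinatorics

end Paper

namespace Paper

section Uniqueness

/-- Any solution of the `star` identity is given by Devlin's coefficients. -/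
lemma star_unique (F : Series)
    (hF : ∀ η : Word, ∑ ξ ∈ allW η.length, F ξ * phi (-ferfera) ξ one η = ferfera η) :
    ∀ η : Word, F η = ehs 0 η := by
  have hE : ∀ η : Word, ∑ ξ ∈ allW η.length, ehs 0 ξ * phi (-ferfera) ξ one η = ferfera η := by
    intro η
    rw [main_sum η.length η le_rfl 0, ferfera_eq_Tser]
  have key : ∀ (N : ℕ) (η : Word), degW η ≤ N → F η = ehs 0 η := by
    intro N
    induction N with
    | zero => intro η hη; exact absurd hη (by have := one_le_degW η; omega)
    | succ N ih =>
        intro η hη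
        by_cases hle : degW η ≤ N
        · exact ih η hle
        · have hdeg : degW η = N + 1 := by omega
          have hdiff : ∑ ξ ∈ allW η.length, (F ξ - ehs 0 ξ) * phi (-ferfera) ξ one η = 0 := by
            have := hF η
            have := hE η
            rw [show (fun ξ => (F ξ - ehs 0 ξ) * phi (-ferfera) ξ one η)
                = fun ξ => F ξ * phi (-ferfera) ξ one η - ehs 0 ξ * phi (-ferfera) ξ one η
                from by funext ξ; ring]
            rw [Finset.sum_sub_distrib, hF η, hE η, sub_self]
          have hsingle : ∑ ξ ∈ allW η.length, (F ξ - ehs 0 ξ) * phi (-ferfera) ξ one η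
              = (F η - ehs 0 η) * phi (-ferfera) η one η := by
            apply Finset.sum_eq_single
            · intro ξ _ hne
              by_cases hd : degW ξ ≤ N
              · rw [ih ξ hd, sub_self, zero_mul]
              · have h1 : wsum 2 1 η ≤ wsum 2 1 ξ := by
                  rw [degW_eq_wsum] at hdeg hd; omega
                rw [phi_diag (-ferfera) ξ η h1, if_neg hne, mul_zero]
            · intro hni
              exact absurd (mem_allW.mpr le_rfl) hni
          rw [hsingle, phi_diag (-ferfera) η η le_rfl, if_pos rfl, mul_one] at hdiff
          linarith
  intro η
  exact key (degW η) η le_rfl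

end Uniqueness

end Paper

open Paper in
/-- Let `c = Σ_{k≥0} k! x1^k` be the Ferfera series and for `n ≥ 1` let
`a_n := Σ_{η : deg(η) = n} (S a_η)(−c) · η` be the degree-`n` component of `(−c)^{∘−1}`.
Then `a_n = (n−1) Σ_{deg(η)=n−1} (S a_η)(−c) · η x1 + (n−2) Σ_{deg(η)=n−2} (S a_η)(−c) · η x0`,
i.e. the polynomials `a_n` satisfy Devlin's recursion `a_n = (n−1) a_{n−1} x1 + (n−2) a_{n−2} x0`. -/
theorem devlin_recursion
    (Δ : H →ₐ[ℝ] (H ⊗[ℝ] H)) (hΔ : IsFBCoproduct Δ)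
    (S : H →ₗ[ℝ] H) (hS : IsAntipode Δ S) :
    ∀ n : ℕ, 2 ≤ n →
      devlin S n =
        ((n : ℝ) - 1) • rconcat 1 (devlin S (n - 1)) +
        ((n : ℝ) - 2) • rconcat 0 (devlin S (n - 2)) := by
  have key : ∀ η : Word, evalS (-ferfera) (S (aw η)) = ehs 0 η :=
    star_unique _ (star_identity hΔ hS)
  intro n hn
  funext η
  rw [Pi.add_apply, Pi.smul_apply, Pi.smul_apply, smul_eq_mul, smul_eq_mul]
  rcases List.eq_nil_or_concat' η with rfl | ⟨μ, i, rfl⟩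
  · simp only [devlin, rconcat]
    rw [if_neg (by simp [degW]; omega), if_neg (by simp), if_neg (by simp)]
    ring
  · simp only [devlin, rconcat]
    rw [List.getLast?_concat, List.dropLast_concat, degW_concat]
    rcases fin2_eq i with rfl | rfl
    · -- last letter x0 : coefficient n − 2
      rw [if_neg (show ¬ (some (0:Fin 2) = some 1) by simp), mul_zero, zero_add,
        if_pos (rfl : some (0:Fin 2) = some 0),
        show (degW μ + if (0:Fin 2) = 0 then 2 else 1) = degW μ + 2 from by rw [if_pos rfl]]
      by_cases hd : degW μ + 2 = n
      · rw [if_pos hd, if_pos (by omega : degW μ = n - 2), key, key, ehs_concat]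
        have hc : (degW μ : ℝ) = (n : ℝ) - 2 := by
          have h2 : ((degW μ + 2 : ℕ) : ℝ) = (n : ℝ) := by rw [hd]
          push_cast at h2
          linarith
        rw [hc]
        ring
      · rw [if_neg hd, if_neg (by omega : ¬ degW μ = n - 2)]
        ring
    · -- last letter x1 : coefficient n − 1
      rw [if_neg (show ¬ (some (1:Fin 2) = some 0) by simp), mul_zero, add_zero,
        if_pos (rfl : some (1:Fin 2) = some 1),
        show (degW μ + if (1:Fin 2) = 0 then 2 else 1) = degW μ + 1 from by
          rw [if_neg (by decide : ¬ (1:Fin 2) = 0)]]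
      by_cases hd : degW μ + 1 = n
      · rw [if_pos hd, if_pos (by omega : degW μ = n - 1), key, key, ehs_concat]
        have hc : (degW μ : ℝ) = (n : ℝ) - 1 := by
          have h2 : ((degW μ + 1 : ℕ) : ℝ) = (n : ℝ) := by rw [hd]
          push_cast at h2
          linarith
        rw [hc]
        ring
      · rw [if_neg hd, if_neg (by omega : ¬ degW μ = n - 1)]
        ring
end
end

section
/- Define polynomials a_n in noncommuting variables x0, x1 by a_1 = ∅ (the empty word), a_2 = x1, and a_n = (n−1) a_{n−1} x1 + (n−2) a_{n−2} x0 for n ≥ 3. Then for every word η = x_{i1} ⋯ x_{ik} ∈ X*: ⟨a_n, η⟩ = 0 if deg(η) ≠ n; ⟨a_n, η⟩ = 1 if deg(η) = n and k ∈ {0, 1}; and ⟨a_n, η⟩ = ∏_{j=1}^{k−1} deg(x_{i1} ⋯ x_{ij}) if deg(η) = n and k ≥ 2. -/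
open scoped TensorProduct

noncomputable section

namespace Paper

/-- Devlin's canonical polynomials in the noncommuting variables `x0, x1` (elements of
`ℚ⟨X⟩`, given by their coefficient functions): `a_1 = ∅`, `a_2 = x1`, and
`a_n = (n−1) a_{n−1} x1 + (n−2) a_{n−2} x0` for `n ≥ 3`. -/
def devlinPoly : ℕ → (Word → ℚ)
  | 0 => 0
  | 1 => fun w => if w = [] then 1 else 0
  | 2 => fun w => if w = [(1 : Fin 2)] then 1 else 0
  | n + 3 =>
      ((n : ℚ) + 2) • rconcat 1 (devlinPoly (n + 2))
        + ((n : ℚ) + 1) • rconcat 0 (devlinPoly (n + 1))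

end Paper

namespace Paper

def cfun (η : Word) : ℚ := ∏ j ∈ Finset.range (η.length - 1), (degW (η.take (j + 1)) : ℚ)

lemma count_sum (η : Word) : η.count 0 + η.count 1 = η.length := by
  induction η with
  | nil => simp
  | cons a t ih =>
      fin_cases a <;> simp [List.count_cons] <;> omega

lemma degW_concat_one (σ : Word) : degW (σ ++ [1]) = degW σ + 1 := by
  simp [degW, List.count_append]; omega

lemma degW_concat_zero (σ : Word) : degW (σ ++ [0]) = degW σ + 2 := by
  simp [degW, List.count_append]; ring

lemma cfun_concat (σ : Word) (a : Fin 2) : cfun (σ ++ [a]) = cfun σ * degW σ := by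
  rcases List.eq_nil_or_concat σ.reverse with h | ⟨t, b, h⟩
  · have : σ = [] := by simpa using congrArg List.reverse h
    subst this
    simp [cfun, degW]
  · have hσ : 1 ≤ σ.length := by
      rcases σ with _ | _ <;> simp_all
    unfold cfun
    rw [List.length_append]
    simp only [List.length_singleton]
    have h1 : σ.length + 1 - 1 = (σ.length - 1) + 1 := by omega
    rw [h1, Finset.prod_range_succ]
    have h2 : ∀ j ∈ Finset.range (σ.length - 1),
        (degW ((σ ++ [a]).take (j + 1)) : ℚ) = (degW (σ.take (j + 1)) : ℚ) := by
      intro j hj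
      rw [List.take_append_of_le_length (by simp at hj; omega)]
    rw [Finset.prod_congr rfl h2]
    congr 2
    rw [show σ.length - 1 + 1 = σ.length by omega,
      List.take_append_of_le_length le_rfl, List.take_length]

lemma key (n : ℕ) : ∀ η : Word, devlinPoly n η = if degW η = n then cfun η else 0 := by
  induction n using Nat.strong_induction_on with
  | _ n ih =>
    match n with
    | 0 =>
      intro η
      have hs := count_sum η
      rw [if_neg (by unfold degW; omega)]
      rfl
    | 1 =>
      intro η
      show (if η = [] then (1:ℚ) else 0) = _
      have hs := count_sum η
      split_ifs with h1 h2 h2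
      · subst h1; simp [cfun]
      · subst h1; simp [degW] at h2
      · exfalso; apply h1
        unfold degW at h2
        exact List.eq_nil_of_length_eq_zero (by omega)
      · rfl
    | 2 =>
      intro η
      show (if η = [(1 : Fin 2)] then (1:ℚ) else 0) = _
      have hs := count_sum η
      split_ifs with h1 h2 h2
      · subst h1; simp [cfun]
      · exfalso; subst h1; simp [degW] at h2
      · exfalso; apply h1
        unfold degW at h2
        have hl : η.length = 1 := by omega
        have hc : η.count 0 = 0 := by omega
        rcases η with _ | ⟨a, t⟩
        · simp at hl
        · have ht : t = [] := by simpa using hl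
          subst ht
          fin_cases a
          · simp [List.count_cons] at hc
          · rfl
      · rfl
    | (m + 3) =>
      intro η
      have ih2 := ih (m + 2) (by omega)
      have ih1 := ih (m + 1) (by omega)
      show ((m : ℚ) + 2) • rconcat 1 (devlinPoly (m + 2)) η
          + ((m : ℚ) + 1) • rconcat 0 (devlinPoly (m + 1)) η = _
      rcases List.eq_nil_or_concat η with h | ⟨σ, a, h⟩
      · subst h
        rw [if_neg (by simp [degW])]
        simp [rconcat]
      · subst h
        simp only [List.concat_eq_append]
        unfold rconcat
        rw [List.getLast?_concat, List.dropLast_concat]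
        rw [cfun_concat]
        have ha : a = 0 ∨ a = 1 := by
          rcases a with ⟨_ | _ | k, hk⟩
          exacts [Or.inl rfl, Or.inr rfl, absurd hk (by omega)]
        rcases ha with rfl | rfl
        · have hdeg := degW_concat_zero σ
          simp only [Option.some.injEq, if_false, if_true, smul_eq_mul,
            show ((0 : Fin 2) = 1) = False by simp, show ((0 : Fin 2) = 0) = True by simp]
          rw [ih1, hdeg]
          split_ifs with h1 h2 h2
          · have : degW σ = m + 1 := by omega
            rw [this]; push_cast; ring
          · omega
          · omega
          · ring
        · have hdeg := degW_concat_one σ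
          simp only [Option.some.injEq, smul_eq_mul,
            show ((1 : Fin 2) = 1) = True by simp, show ((1 : Fin 2) = 0) = False by simp,
            if_true, if_false]
          rw [ih2, hdeg]
          split_ifs with h1 h2 h2
          · have : degW σ = m + 2 := by omega
            rw [this]; push_cast; ring
          · omega
          · omega
          · ring

end Paper

open Paper in
/-- For the polynomials `a_n` defined by `a_1 = ∅`, `a_2 = x1` and
`a_n = (n−1) a_{n−1} x1 + (n−2) a_{n−2} x0` (`n ≥ 3`), and every word
`η = x_{i_1} ⋯ x_{i_k} ∈ X*`:  `⟨a_n, η⟩ = 0` if `deg(η) ≠ n`; `⟨a_n, η⟩ = 1` if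
`deg(η) = n` and `k ∈ {0,1}`; and `⟨a_n, η⟩ = ∏_{j=1}^{k−1} deg(x_{i_1} ⋯ x_{i_j})` if
`deg(η) = n` and `k ≥ 2`. -/
theorem devlin_coefficient_formula :
    ∀ (n : ℕ), 1 ≤ n → ∀ η : Word,
      (degW η ≠ n → devlinPoly n η = 0) ∧
      (degW η = n → η.length ≤ 1 → devlinPoly n η = 1) ∧
      (degW η = n → 2 ≤ η.length →
        devlinPoly n η = ∏ j ∈ Finset.range (η.length - 1), (degW (η.take (j + 1)) : ℚ)) := by
  intro n hn η
  refine ⟨fun h => ?_, fun h hl => ?_, fun h hl => ?_⟩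
  · rw [key, if_neg h]
  · rw [key, if_pos h]
    unfold cfun
    rw [show η.length - 1 = 0 by omega]
    simp
  · rw [key, if_pos h]
    rfl
end
end

section
/- Let c = Σ_{k≥0} k! x1^k be the Ferfera series and let e := (−c)^{∘−1} be defined by δ + e being the group inverse of δ + (−c) in the output feedback group. Then e satisfies the shuffle equation e = ∅ + x0 (e ⧢ e ⧢ e) + x1 (e ⧢ e); equivalently x0^{−1}(e) = e^{⧢3}, x1^{−1}(e) = e^{⧢2}, and ⟨e, ∅⟩ = 1. -/
open scoped TensorProduct

noncomputable section

/-!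
Since `δ + e` is a right inverse of `δ - c`, `e` is the fixed point `e = c ∘̃ e`. The map
`a ↦ a ∘̃ e` is a shuffle homomorphism, preserves constant terms, and satisfies
`x1⁻¹(a ∘̃ e) = x1⁻¹(a) ∘̃ e` and `x0⁻¹(a ∘̃ e) = x0⁻¹(a) ∘̃ e + e ⧢ (x1⁻¹(a) ∘̃ e)`.
The Ferfera series has `x0⁻¹(c) = 0` and `c ⧢ c = x1⁻¹(c)` (from
`Σ_k C(n,k) k! (n-k)! = (n+1)!`), so `x1⁻¹(e) = (c ⧢ c) ∘̃ e = e ⧢ e` and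
`x0⁻¹(e) = e ⧢ (e ⧢ e)`.
-/

namespace Paper

lemma lshift_add (i : Fin 2) (c d : Series) : lshift i (c + d) = lshift i c + lshift i d := rfl

lemma lshift_smul (i : Fin 2) (r : ℝ) (c : Series) : lshift i (r • c) = r • lshift i c := rfl

lemma sh_nil (c d : Series) : sh c d [] = c [] * d [] := rfl

lemma sh_cons (c d : Series) (i : Fin 2) (w : Word) :
    sh c d (i :: w) = sh (lshift i c) d w + sh c (lshift i d) w := rfl

lemma lshift_sh (i : Fin 2) (c d : Series) :
    lshift i (sh c d) = sh (lshift i c) d + sh c (lshift i d) := rfl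

theorem sh_comm (c d : Series) : sh c d = sh d c := by
  funext w
  induction w generalizing c d with
  | nil => exact mul_comm _ _
  | cons i w ih => rw [sh_cons, sh_cons, ih (lshift i c), ih c, add_comm]

theorem sh_add_left (c c' d : Series) : sh (c + c') d = sh c d + sh c' d := by
  funext w
  induction w generalizing c c' d with
  | nil => exact add_mul _ _ _
  | cons i w ih =>
    simp only [Pi.add_apply, sh_cons, lshift_add, ih]
    ring

theorem sh_add_right (c d d' : Series) : sh c (d + d') = sh c d + sh c d' := by
  rw [sh_comm, sh_add_left, sh_comm d, sh_comm d']

theorem sh_smul_right (c d : Series) (r : ℝ) : sh c (r • d) = r • sh c d := by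
  funext w
  induction w generalizing c d with
  | nil => exact mul_left_comm _ _ _
  | cons i w ih =>
    simp only [Pi.smul_apply, sh_cons, lshift_smul, ih, smul_eq_mul]
    ring

theorem sh_zero_right (c : Series) : sh c 0 = 0 := by
  simpa using sh_smul_right c 0 0

theorem sh_zero_left (d : Series) : sh 0 d = 0 := by
  rw [sh_comm, sh_zero_right]

theorem sh_assoc (a b c : Series) : sh (sh a b) c = sh a (sh b c) := by
  funext w
  induction w generalizing a b c with
  | nil => exact mul_assoc _ _ _
  | cons i w ih =>
    simp only [sh_cons, lshift_sh, sh_add_left, sh_add_right, Pi.add_apply, ih]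
    ring

theorem sh_apply_congr {c c' d d' : Series} {w : Word}
    (hc : ∀ v : Word, v.length ≤ w.length → c v = c' v)
    (hd : ∀ v : Word, v.length ≤ w.length → d v = d' v) : sh c d w = sh c' d' w := by
  induction w generalizing c c' d d' with
  | nil => rw [sh_nil, sh_nil, hc [] le_rfl, hd [] le_rfl]
  | cons i w ih =>
    have hshort : ∀ v : Word, v.length ≤ w.length → v.length ≤ (i :: w).length :=
      fun v hv => by simp only [List.length_cons]; omega
    exact congrArg₂ (· + ·)
      (ih (fun v hv => hc (i :: v) (by simpa using hv)) (fun v hv => hd v (hshort v hv)))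
      (ih (fun v hv => hc v (hshort v hv)) (fun v hv => hd (i :: v) (by simpa using hv)))

theorem sh_apply_eq_zero_of_right {c d : Series} {w : Word}
    (hd : ∀ v : Word, v.length ≤ w.length → d v = 0) : sh c d w = 0 := by
  rw [sh_apply_congr (d' := 0) (fun _ _ => rfl) hd, sh_zero_right, Pi.zero_apply]

section

variable {ι : Type*} (d : Series) (F : ι → Series)

theorem summable_sh_right (hF : ∀ v, Summable fun k => F k v) (w : Word) :
    Summable fun k => sh d (F k) w := by
  induction w generalizing d F with
  | nil => exact (hF []).mul_left (d [])
  | cons i w ih =>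
    exact (ih (lshift i d) F hF).add (ih d (fun k => lshift i (F k)) fun v => hF (i :: v))

theorem sh_tsum_right (hF : ∀ v, Summable fun k => F k v) (w : Word) :
    sh d (fun v => ∑' k, F k v) w = ∑' k, sh d (F k) w := by
  induction w generalizing d F with
  | nil => exact tsum_mul_left.symm
  | cons i w ih =>
    have hF' : ∀ v, Summable fun k => lshift i (F k) v := fun v => hF (i :: v)
    rw [sh_cons, ih (lshift i d) F hF,
      show lshift i (fun v => ∑' k, F k v) = fun v => ∑' k, lshift i (F k) v from rfl,
      ih d _ hF', ← Summable.tsum_add (summable_sh_right _ F hF w) (summable_sh_right d _ hF' w)]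
    rfl

end

lemma lshift_lconcat (i j : Fin 2) (e : Series) :
    lshift j (lconcat i e) = if j = i then e else 0 := by
  funext w
  by_cases h : j = i <;> simp [lshift, lconcat, h]

lemma phiLetter_nil (d : Series) (i : Fin 2) (e : Series) : phiLetter d i e [] = 0 := by
  by_cases h : i = 0 <;> simp [phiLetter, lconcat, h]

lemma lshift_zero_phiLetter (d : Series) (i : Fin 2) (e : Series) :
    lshift 0 (phiLetter d i e) = if i = 0 then e else sh d e := by
  fin_cases i <;> simp [phiLetter, lshift_add, lshift_lconcat]

lemma lshift_one_phiLetter (d : Series) (i : Fin 2) (e : Series) :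
    lshift 1 (phiLetter d i e) = if i = 1 then e else 0 := by
  fin_cases i <;> simp [phiLetter, lshift_add, lshift_lconcat]

lemma phi_cons_apply_cons (d e : Series) (i j : Fin 2) (η w : Word) :
    phi d (i :: η) e (j :: w) = lshift j (phiLetter d i (phi d η e)) w := rfl

theorem phi_apply_of_length_lt (d e : Series) {η w : Word} (h : w.length < η.length) :
    phi d η e w = 0 := by
  induction η generalizing w with
  | nil => exact absurd h (Nat.not_lt_zero _)
  | cons i η ih =>
    cases w with
    | nil => exact phiLetter_nil d i _
    | cons j v =>
      have hv : v.length < η.length := by simpa using h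
      rw [phi_cons_apply_cons]
      match j with
      | 0 =>
        rw [lshift_zero_phiLetter]
        split_ifs
        · exact ih hv
        · exact sh_apply_eq_zero_of_right fun u hu => ih (by omega)
      | 1 =>
        rw [lshift_one_phiLetter]
        split_ifs
        · exact ih hv
        · rfl

theorem summable_mcomp (c d : Series) (w : Word) : Summable fun η => c η * phi d η one w := by
  refine summable_of_hasFiniteSupport ((List.finite_length_le (Fin 2) w.length).subset ?_)
  intro η hη
  by_contra hlong
  refine hη ?_
  dsimp only
  rw [phi_apply_of_length_lt d one (by simpa using hlong), mul_zero]

theorem tsum_word_eq_add (f : Word → ℝ) (hf : Summable f) (hnil : f [] = 0) :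
    ∑' η, f η = ∑' η, f (0 :: η) + ∑' η, f (1 :: η) := by
  have hhead (i : Fin 2) :
      ∑' η, {μ : Word | μ.head? = some i}.indicator f η = ∑' η, f (i :: η) := by
    rw [← (List.cons_injective (a := i)).tsum_eq]
    · simp [Set.indicator_apply]
    · intro μ hμ
      have hμ := Set.mem_of_indicator_ne_zero hμ
      cases μ with
      | nil => simp at hμ
      | cons j η => exact ⟨η, by simpa using hμ.symm⟩
  rw [← hhead, ← hhead, ← Summable.tsum_add (hf.indicator _) (hf.indicator _)]
  congr 1
  funext μ
  match μ with
  | [] => simp [hnil]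
  | 0 :: η => simp [Set.indicator_apply]
  | 1 :: η => simp [Set.indicator_apply]

theorem mcomp_nil (c d : Series) : mcomp c d [] = c [] := by
  rw [mcomp, tsum_eq_single []]
  · simp [phi, one, ind]
  · intro η hη
    rw [phi_apply_of_length_lt d one (w := []) (List.length_pos_iff.mpr hη), mul_zero]

theorem mcomp_neg_left (c d : Series) : mcomp (-c) d = -mcomp c d := by
  funext w
  simp [mcomp, tsum_neg]

theorem mcomp_add_left (a b d : Series) : mcomp (a + b) d = mcomp a d + mcomp b d := by
  funext w
  simp only [mcomp, Pi.add_apply, add_mul]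
  exact Summable.tsum_add (summable_mcomp a d w) (summable_mcomp b d w)

theorem mcomp_zero_left (d : Series) : mcomp 0 d = 0 := by
  funext w
  simp [mcomp]

theorem sh_mcomp_apply (c d e : Series) (w : Word) :
    sh d (mcomp c e) w = ∑' η, c η * sh d (phi e η one) w := by
  rw [show mcomp c e = fun v => ∑' η, (c η • phi e η one) v from rfl,
    sh_tsum_right d (fun η => c η • phi e η one) (summable_mcomp c e)]
  simp only [sh_smul_right, Pi.smul_apply, smul_eq_mul]

theorem lshift_one_mcomp (c d : Series) : lshift 1 (mcomp c d) = mcomp (lshift 1 c) d := by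
  funext w
  rw [lshift, mcomp, tsum_word_eq_add _ (summable_mcomp c d _) (by simp [phi, one, ind])]
  simp only [phi_cons_apply_cons, lshift_one_phiLetter, zero_ne_one, ↓reduceIte, Pi.zero_apply,
    mul_zero, tsum_zero, zero_add]
  rfl

theorem lshift_zero_mcomp (c d : Series) :
    lshift 0 (mcomp c d) = mcomp (lshift 0 c) d + sh d (mcomp (lshift 1 c) d) := by
  funext w
  rw [lshift, mcomp, tsum_word_eq_add _ (summable_mcomp c d _) (by simp [phi, one, ind]),
    Pi.add_apply, sh_mcomp_apply]
  simp only [phi_cons_apply_cons, lshift_zero_phiLetter, ↓reduceIte, one_ne_zero]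
  rfl

section

variable (d : Series)

lemma sh_mcomp_mcomp_nil (a b : Series) :
    sh (mcomp a d) (mcomp b d) [] = mcomp (sh a b) d [] := by
  rw [sh_nil, mcomp_nil, mcomp_nil, mcomp_nil, sh_nil]

lemma sh_mcomp_mcomp_cons_one {v : Word}
    (ih : ∀ a b : Series, sh (mcomp a d) (mcomp b d) v = mcomp (sh a b) d v) (a b : Series) :
    sh (mcomp a d) (mcomp b d) (1 :: v) = mcomp (sh a b) d (1 :: v) := by
  change lshift 1 (sh _ _) v = lshift 1 (mcomp _ d) v
  rw [lshift_sh, lshift_one_mcomp, lshift_one_mcomp, lshift_one_mcomp, lshift_sh,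
    mcomp_add_left, Pi.add_apply, Pi.add_apply, ih, ih]

lemma sh_add_sh_regroup (x y z w A B : Series) :
    sh (x + sh d y) B + sh A (z + sh d w) = sh x B + sh A z + sh d (sh y B + sh A w) := by
  rw [sh_add_left, sh_add_right, sh_add_right, sh_assoc, sh_comm A (sh d w), sh_assoc,
    sh_comm w A]
  abel

/-- Through `d ⧢ x1⁻¹(…)` the `x0`-coefficient depends on all shorter coefficients, not just on
those at `v`; hence the strong induction on length in `sh_mcomp_mcomp`. -/
lemma sh_mcomp_mcomp_cons_zero {v : Word}
    (ih : ∀ u : Word, u.length ≤ v.length →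
      ∀ a b : Series, sh (mcomp a d) (mcomp b d) u = mcomp (sh a b) d u) (a b : Series) :
    sh (mcomp a d) (mcomp b d) (0 :: v) = mcomp (sh a b) d (0 :: v) := by
  change lshift 0 (sh _ _) v = lshift 0 (mcomp _ d) v
  have hone : ∀ u : Word, u.length ≤ v.length →
      lshift 1 (sh (mcomp a d) (mcomp b d)) u = mcomp (lshift 1 (sh a b)) d u := by
    intro u hu
    rw [← lshift_one_mcomp]
    exact sh_mcomp_mcomp_cons_one d (ih u hu) a b
  rw [lshift_sh, lshift_zero_mcomp, lshift_zero_mcomp, ← lshift_one_mcomp, ← lshift_one_mcomp,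
    sh_add_sh_regroup, ← lshift_sh, Pi.add_apply, Pi.add_apply, ih v le_rfl, ih v le_rfl,
    sh_apply_congr (fun _ _ => rfl) hone, lshift_zero_mcomp, lshift_sh 0, mcomp_add_left]
  rfl

theorem sh_mcomp_mcomp (a b : Series) : sh (mcomp a d) (mcomp b d) = mcomp (sh a b) d := by
  funext w
  induction hn : w.length using Nat.strong_induction_on generalizing w a b with
  | _ n ih =>
    subst hn
    match w with
    | [] => exact sh_mcomp_mcomp_nil d a b
    | (0 : Fin 2) :: v =>
      exact sh_mcomp_mcomp_cons_zero d
        (fun u hu a b => ih u.length (by simp; omega) a b u rfl) a b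
    | (1 : Fin 2) :: v =>
      exact sh_mcomp_mcomp_cons_one d (fun a b => ih v.length (by simp) a b v rfl) a b

end

section

open Nat

/-- `(x1⁻¹)^a` applied to the Ferfera series. -/
def ferferaShift (a : ℕ) : Series := fun w =>
  if w = List.replicate w.length (1 : Fin 2) then ((w.length + a)! : ℝ) else 0

lemma ferferaShift_zero : ferferaShift 0 = ferfera := rfl

lemma ferferaShift_nil (a : ℕ) : ferferaShift a [] = a ! := by
  simp [ferferaShift]

lemma lshift_zero_ferferaShift (a : ℕ) : lshift 0 (ferferaShift a) = 0 := by
  funext w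
  simp [lshift, ferferaShift, List.replicate_succ]

lemma lshift_one_ferferaShift (a : ℕ) : lshift 1 (ferferaShift a) = ferferaShift (a + 1) := by
  funext w
  simp [lshift, ferferaShift, List.replicate_succ, add_assoc, add_comm 1 a]

lemma factorial_div_add_factorial_div (a b : ℕ) :
    ((a + 1)! * b ! / (a + b + 1 + 1)! + a ! * (b + 1)! / (a + b + 1 + 1)! : ℝ) =
      a ! * b ! / (a + b + 1)! := by
  simp only [Nat.factorial_succ, Nat.cast_mul, Nat.cast_add, Nat.cast_one]
  field_simp
  ring

theorem sh_ferferaShift (a b : ℕ) :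
    sh (ferferaShift a) (ferferaShift b) =
      (a ! * b ! / (a + b + 1)! : ℝ) • ferferaShift (a + b + 1) := by
  funext w
  induction w generalizing a b with
  | nil =>
    rw [sh_nil, Pi.smul_apply, ferferaShift_nil, ferferaShift_nil, ferferaShift_nil, smul_eq_mul,
      div_mul_cancel₀ _ (by positivity)]
  | cons i w ih =>
    rw [sh_cons, Pi.smul_apply]
    change _ = _ • lshift i (ferferaShift (a + b + 1)) w
    match i with
    | 0 => simp [lshift_zero_ferferaShift, sh_zero_left, sh_zero_right]
    | 1 =>
      rw [lshift_one_ferferaShift, lshift_one_ferferaShift, lshift_one_ferferaShift, ih, ih,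
        Pi.smul_apply, Pi.smul_apply, show a + 1 + b + 1 = a + b + 1 + 1 by omega,
        show a + (b + 1) + 1 = a + b + 1 + 1 by omega, ← add_smul,
        factorial_div_add_factorial_div]

theorem sh_ferfera_self : sh ferfera ferfera = lshift 1 ferfera := by
  rw [← ferferaShift_zero, sh_ferferaShift, lshift_one_ferferaShift]
  simp

theorem lshift_zero_ferfera : lshift 0 ferfera = 0 := lshift_zero_ferferaShift 0

theorem ferfera_nil : ferfera [] = 1 := by
  simp [← ferferaShift_zero, ferferaShift_nil]

end

theorem eq_ind_nil_add_lconcat (f : Series) :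
    f = f [] • ind [] + lconcat 0 (lshift 0 f) + lconcat 1 (lshift 1 f) := by
  funext w
  match w with
  | [] => simp [ind, lconcat]
  | (0 : Fin 2) :: v => simp [ind, lconcat, lshift]
  | (1 : Fin 2) :: v => simp [ind, lconcat, lshift]

end Paper

open Paper in
/-- Let `c = Σ_{k≥0} k! x1^k` be the Ferfera series and let
`e := (−c)^{∘−1}` be defined by `δ + e` being the group inverse of `δ + (−c)` in the
output feedback group.  Then `e` satisfies the shuffle equation
`e = ∅ + x0 (e ⧢ e ⧢ e) + x1 (e ⧢ e)`; equivalently `x0⁻¹(e) = e^{⧢3}`,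
`x1⁻¹(e) = e^{⧢2}` and `⟨e, ∅⟩ = 1`. -/
theorem ferfera_inverse_shuffle_equation (e : Series)
    (hinv : gop (-ferfera) e = 0 ∧ gop e (-ferfera) = 0) :
    (e = ind [] + lconcat 0 (sh (sh e e) e) + lconcat 1 (sh e e)) ∧
    lshift 0 e = sh (sh e e) e ∧ lshift 1 e = sh e e ∧ e [] = 1 := by
  have hfix : mcomp ferfera e = e := by
    have h := hinv.1
    rwa [gop, mcomp_neg_left, add_neg_eq_zero, eq_comm] at h
  have hsq : mcomp (lshift 1 ferfera) e = sh e e := by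
    rw [← sh_ferfera_self, ← sh_mcomp_mcomp, hfix]
  have h1 : lshift 1 e = sh e e := by
    rw [← hsq, ← lshift_one_mcomp, hfix]
  have h0 : lshift 0 e = sh (sh e e) e := by
    conv_lhs => rw [← hfix]
    rw [lshift_zero_mcomp, lshift_zero_ferfera, mcomp_zero_left, zero_add, hsq, sh_comm]
  have hnil : e [] = 1 := by
    rw [← hfix, mcomp_nil, ferfera_nil]
  refine ⟨?_, h0, h1, hnil⟩
  conv_lhs => rw [eq_ind_nil_add_lconcat e]
  rw [h0, h1, hnil, one_smul]
end
end
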